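/- arXiv:2603.29444 — 3 statements merged into one kernel-verified Lean document; each statement's English description precedes it below -/
import Mathlib

section
/- (Proposition 3.) Let a, b, c, d be positive real numbers (line segments) and let A, B, C be natural numbers with A > 0. If (A : ℝ) * a^2 = (B : ℝ) * a * b + (C : ℝ) * b^2 and (A : ℝ) * c^2 = (B : ℝ) * c * d + (C : ℝ) * d^2, then a * d = b * c. -/
/-- Proposition 3. -/
theorem prop_three (a b c d : ℝ) (ha : 0 < a) (hb : 0 < b) (hc : 0 < c) (hd : 0 < d)
    (A B C : ℕ) (hA : 0 < A)
    (h1 : (A : ℝ) * a ^ 2 = (B : ℝ) * a * b + (C : ℝ) * b ^ 2)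
    (h2 : (A : ℝ) * c ^ 2 = (B : ℝ) * c * d + (C : ℝ) * d ^ 2) :
    a * d = b * c := by
  have hA' : (0 : ℝ) < A := by exact_mod_cast hA
  have hC : (0 : ℝ) ≤ C := by positivity
  have key : (a * d - b * c) * ((A : ℝ) * (a * d + b * c) - (B : ℝ) * b * d) = 0 := by
    nlinarith [mul_pos hd hd, mul_pos hb hb, sq_nonneg (a*d - b*c)]
  rcases mul_eq_zero.1 key with h | h
  · linarith
  · -- A(ad+bc) = Bbd; derive contradiction: -A ad bc = C b² d²
    exfalso
    have h3 : (A : ℝ) * a^2 * d^2 = (B : ℝ) * a * b * d^2 + (C : ℝ) * b^2 * d^2 := by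
      nlinarith [h1]
    have h4 : ((A : ℝ) * (a * d + b * c) - (B : ℝ) * b * d) * (a * d) = 0 := by
      rw [h]; ring
    nlinarith [mul_pos hA' (mul_pos (mul_pos ha hd) (mul_pos hb hc)),
      mul_nonneg hC (mul_nonneg (mul_nonneg hb.le hb.le) (mul_nonneg hd.le hd.le))]
end

section
/- (Proposition 5, interpretation of Euclid's Postulate 4.) Let a, b be positive real numbers with a^2 = 2 * b^2 (so that a and b are the hypotenuse and side of an isosceles right triangle, by the Pythagorean theorem). Then the anthyphairesis of a to b equals [1; 2, 2, 2, ...]: the integer part of the continued fraction expansion of a / b is 1, i.e. (GenContFract.of (a / b)).h = 1, and every partial denominator equals 2, i.e. for every n, (GenContFract.of (a / b)).partDens.get? n = some 2. -/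
open Real

private lemma sqrt2_lt_two : Real.sqrt 2 < 2 := by
  nlinarith [Real.sq_sqrt (by norm_num : (2:ℝ) ≥ 0), Real.sqrt_nonneg 2]

private lemma one_lt_sqrt2 : 1 < Real.sqrt 2 := by
  nlinarith [Real.sq_sqrt (by norm_num : (2:ℝ) ≥ 0), Real.sqrt_nonneg 2]

private lemma fract_sqrt2 : Int.fract (Real.sqrt 2) = Real.sqrt 2 - 1 := by
  have : ⌊Real.sqrt 2⌋ = 1 := by
    rw [Int.floor_eq_iff]
    constructor
    · exact_mod_cast one_lt_sqrt2.le
    · push_cast; linarith [sqrt2_lt_two]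
  rw [Int.fract, this]; norm_num

private lemma inv_sqrt2_sub_one : (Real.sqrt 2 - 1)⁻¹ = Real.sqrt 2 + 1 := by
  have h1 := one_lt_sqrt2
  have hs : Real.sqrt 2 ^ 2 = 2 := Real.sq_sqrt (by norm_num)
  have hm : (Real.sqrt 2 - 1) * (Real.sqrt 2 + 1) = 1 := by nlinarith
  exact inv_eq_of_mul_eq_one_right hm

private lemma fract_sqrt2_ne : Int.fract (Real.sqrt 2) ≠ 0 := by
  rw [fract_sqrt2]; have := one_lt_sqrt2; linarith

private lemma fract_sqrt2_add_one : Int.fract (Real.sqrt 2 + 1) = Real.sqrt 2 - 1 := by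
  rw [Int.fract_add_one, fract_sqrt2]

private lemma floor_sqrt2_add_one : ⌊Real.sqrt 2 + 1⌋ = 2 := by
  rw [Int.floor_eq_iff]
  have := one_lt_sqrt2; have := sqrt2_lt_two
  constructor <;> push_cast <;> linarith

private lemma s_sqrt2_add_one (n : ℕ) :
    (GenContFract.of (Real.sqrt 2 + 1)).s.get? n = some ⟨1, 2⟩ := by
  induction n with
  | zero =>
      have h : Int.fract (Real.sqrt 2 + 1) ≠ 0 := by
        rw [fract_sqrt2_add_one]; have := one_lt_sqrt2; linarith
      have := GenContFract.of_s_head h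
      rw [show (GenContFract.of (Real.sqrt 2 + 1)).s.head
          = (GenContFract.of (Real.sqrt 2 + 1)).s.get? 0 from rfl] at this
      rw [this, fract_sqrt2_add_one, inv_sqrt2_sub_one, floor_sqrt2_add_one]
      norm_num
  | succ n ih =>
      rw [GenContFract.of_s_succ, fract_sqrt2_add_one, inv_sqrt2_sub_one]
      exact ih

private lemma s_sqrt2 (n : ℕ) :
    (GenContFract.of (Real.sqrt 2)).s.get? n = some ⟨1, 2⟩ := by
  cases n with
  | zero =>
      have := GenContFract.of_s_head fract_sqrt2_ne
      rw [show (GenContFract.of (Real.sqrt 2)).s.head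
          = (GenContFract.of (Real.sqrt 2)).s.get? 0 from rfl] at this
      rw [this, fract_sqrt2, inv_sqrt2_sub_one, floor_sqrt2_add_one]
      norm_num
  | succ n =>
      rw [GenContFract.of_s_succ, fract_sqrt2, inv_sqrt2_sub_one]
      exact s_sqrt2_add_one n

/-- Proposition 5: the anthyphairesis of the hypotenuse to the side of every isosceles right
triangle is `[1; 2, 2, 2, ...]`. -/
theorem prop_five (a b : ℝ) (ha : 0 < a) (hb : 0 < b) (h : a ^ 2 = 2 * b ^ 2) :
    (GenContFract.of (a / b)).h = 1 ∧
    ∀ n : ℕ, (GenContFract.of (a / b)).partDens.get? n = some 2 := by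
  have hab : a / b = Real.sqrt 2 := by
    have : a = Real.sqrt 2 * b := by
      have h2 : a = Real.sqrt (a ^ 2) := (Real.sqrt_sq ha.le).symm
      rwa [h, Real.sqrt_mul (by norm_num), Real.sqrt_sq hb.le] at h2
    rw [this]; field_simp
  rw [hab]
  constructor
  · rw [GenContFract.of_h_eq_floor]
    have : ⌊Real.sqrt 2⌋ = 1 := by
      rw [Int.floor_eq_iff]
      constructor
      · exact_mod_cast one_lt_sqrt2.le
      · push_cast; linarith [sqrt2_lt_two]
    rw [this]; norm_num
  · intro n
    rw [GenContFract.partDens, Stream'.Seq.map_get?, s_sqrt2 n]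
    rfl
end

section
/- (Euclid, Elements XI.20 / Menelaus, Spherics Prop. 5 / Pappus, Collection VI.1: the triangle inequality for angles at a solid angle, equivalently for spherical triangles.) Let V be a real inner product space and let x, y, z be nonzero vectors in V. Then the angle between x and z is at most the sum of the angle between x and y and the angle between y and z: InnerProductGeometry.angle x z ≤ InnerProductGeometry.angle x y + InnerProductGeometry.angle y z. -/
theorem angle_triangle_inequality_general {V : Type*} [NormedAddCommGroup V] [InnerProductSpace ℝ V]
    (x y z : V) :
    InnerProductGeometry.angle x z ≤
      InnerProductGeometry.angle x y + InnerProductGeometry.angle y z :=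
  InnerProductGeometry.angle_le_angle_add_angle x y z

/-- The triangle inequality for the face angles of a solid angle (Euclid XI.20), equivalently
the triangle inequality for spherical triangles (Menelaus, Spherics Prop. 5). -/
theorem angle_triangle_inequality {V : Type*} [NormedAddCommGroup V] [InnerProductSpace ℝ V]
    (x y z : V) (hx : x ≠ 0) (hy : y ≠ 0) (hz : z ≠ 0) :
    InnerProductGeometry.angle x z ≤
      InnerProductGeometry.angle x y + InnerProductGeometry.angle y z :=
  angle_triangle_inequality_general x y z
end
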